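/- arXiv:1610.06362 — 3 statements merged into one kernel-verified Lean document; each statement's English description precedes it below -/
import Mathlib

section
/- Delay Lemma (Lemma 4.1): if Γ ⊢ e : t is derivable in the SID type system, then for every splitting of Γ as Γ₁, Γ₂, the judgement Γ₁, •Γ₂ ⊢ e : •t is derivable, where •Γ₂ prefixes every type in Γ₂ with the delay constructor •. -/
set_option autoImplicit false

namespace SID

/-! ## Pre-types and pre-session types as coinductive trees -/

inductive TyLabel : Type
  | unit | endl | inp | out | shared | prod | arrow | lolli | io | delay
  deriving DecidableEq

def TyLabel.arity : TyLabel → ℕ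
  | .unit => 0
  | .endl => 0
  | .inp => 2
  | .out => 2
  | .shared => 1
  | .prod => 2
  | .arrow => 2
  | .lolli => 2
  | .io => 1
  | .delay => 1

def TyF : PFunctor := ⟨TyLabel, fun l => Fin l.arity⟩

/-- Pre-types: possibly infinite coinductively generated trees over the type constructors. -/
abbrev PreTy : Type := TyF.M

namespace PreTy

def label (t : PreTy) : TyLabel := (PFunctor.M.dest t).1

def childN (t : PreTy) (n : ℕ) : PreTy :=
  if h : n < t.label.arity then (PFunctor.M.dest t).2 ⟨n, h⟩ else t

def tyUnit : PreTy := PFunctor.M.mk ⟨TyLabel.unit, Fin.elim0⟩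
def tyEnd : PreTy := PFunctor.M.mk ⟨TyLabel.endl, Fin.elim0⟩
def mk1 (l : TyLabel) (t : PreTy) : PreTy := PFunctor.M.mk ⟨l, fun _ => t⟩
def mk2 (l : TyLabel) (t s : PreTy) : PreTy :=
  PFunctor.M.mk ⟨l, fun i => if i.val = 0 then t else s⟩
def tyShared (T : PreTy) : PreTy := mk1 .shared T
def tyIO (t : PreTy) : PreTy := mk1 .io t
def tyDelay (t : PreTy) : PreTy := mk1 .delay t
def tyInp (t T : PreTy) : PreTy := mk2 .inp t T
def tyOut (t T : PreTy) : PreTy := mk2 .out t T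
def tyProd (t s : PreTy) : PreTy := mk2 .prod t s
def tyArrow (t s : PreTy) : PreTy := mk2 .arrow t s
def tyLolli (t s : PreTy) : PreTy := mk2 .lolli t s
def tyDelayN (n : ℕ) (t : PreTy) : PreTy := tyDelay^[n] t

/-- The type •∞, the unique solution of •∞ = • •∞. -/
def tyBulletInf : PreTy := PFunctor.M.corec (fun _ : Unit => ⟨TyLabel.delay, fun _ => ()⟩) ()

/-- `Lin` is the least predicate singling out linear types. -/
inductive Lin : PreTy → Prop
  | inp {t : PreTy} : t.label = .inp → Lin t
  | out {t : PreTy} : t.label = .out → Lin t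
  | lolli {t : PreTy} : t.label = .lolli → Lin t
  | io {t : PreTy} : t.label = .io → Lin t
  | prodL {t : PreTy} : t.label = .prod → Lin (t.childN 0) → Lin t
  | prodR {t : PreTy} : t.label = .prod → Lin (t.childN 1) → Lin t
  | delay {t : PreTy} : t.label = .delay → Lin (t.childN 0) → Lin t

def Un (t : PreTy) : Prop := ¬ Lin t

/-- `Subtree s t` : `s` is a subtree of the tree representation of `t`. -/
inductive Subtree : PreTy → PreTy → Prop
  | refl (t : PreTy) : Subtree t t
  | child {s t : PreTy} (n : ℕ) : n < t.label.arity → Subtree s (t.childN n) → Subtree s t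

/-- Positions reachable from the root along session-continuation edges. -/
inductive SessPos : PreTy → PreTy → Prop
  | refl (t : PreTy) : SessPos t t
  | cont {t s : PreTy} : SessPos t s → (s.label = .inp ∨ s.label = .out) → SessPos t (s.childN 1)
  | delay {t s : PreTy} : SessPos t s → s.label = .delay → SessPos t (s.childN 0)

/-- A pre-type generated by the grammar of pre-session types. -/
def IsSession (T : PreTy) : Prop :=
  ∀ s, SessPos T s →
    s.label = .endl ∨ s.label = .inp ∨ s.label = .out ∨ s.label = .delay

/-- Infinite paths in the tree representation of a pre-type. -/
def InfPath (t : PreTy) (p : ℕ → PreTy) : Prop :=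
  p 0 = t ∧ ∀ n, ∃ k, k < (p n).label.arity ∧ p (n + 1) = (p n).childN k

/-- A pre-type is a type (Definition 3.1). -/
def IsTy (t : PreTy) : Prop :=
  {s | Subtree s t}.Finite ∧
  (∀ p, InfPath t p → ∀ n, ∃ m, n ≤ m ∧ (p m).label = .delay) ∧
  (∀ s, Subtree s t → s.label = .arrow → Un (s.childN 1) → Un (s.childN 0)) ∧
  (∀ s, Subtree s t → s.label = .lolli → Lin (s.childN 1))

/-- A pre-session type is a session type. -/
def IsSTy (T : PreTy) : Prop := IsTy T ∧ IsSession T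

/-- One step of the corecursive definition of duality. -/
def dualObj : PreTy ⊕ PreTy → TyF.Obj (PreTy ⊕ PreTy)
  | .inr t => ⟨t.label, fun i => .inr (t.childN i.val)⟩
  | .inl t =>
    match t.label with
    | .inp => ⟨TyLabel.out, fun i => if i.val = 0 then .inr (t.childN 0) else .inl (t.childN 1)⟩
    | .out => ⟨TyLabel.inp, fun i => if i.val = 0 then .inr (t.childN 0) else .inl (t.childN 1)⟩
    | .delay => ⟨TyLabel.delay, fun _ => .inl (t.childN 0)⟩
    | l => ⟨l, fun i => .inr (t.childN i.val)⟩

/-- The dual of a session type, coinductively swapping ? and !. -/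
def dualS (T : PreTy) : PreTy := PFunctor.M.corec dualObj (.inl T)

end PreTy

/-! ## Expressions -/

inductive Pol : Type
  | pos | neg
  deriving DecidableEq

def Pol.dual : Pol → Pol
  | .pos => .neg
  | .neg => .pos

inductive Const : Type
  | unit | pair | copen | send | recv | future | ret | bind
  deriving DecidableEq

inductive Expr : Type
  | const : Const → Expr
  | var : String → Expr
  | chan : String → Expr
  | ep : String → Pol → Expr
  | lam : String → Expr → Expr
  | app : Expr → Expr → Expr
  | split : Expr → String → String → Expr → Expr
  deriving DecidableEq

namespace Expr

def retE (e : Expr) : Expr := .app (.const .ret) e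
def pairE (e f : Expr) : Expr := .app (.app (.const .pair) e) f
def bindE (e f : Expr) : Expr := .app (.app (.const .bind) e) f
def sendE (a : String) (p : Pol) (e : Expr) : Expr := .app (.app (.const .send) (.ep a p)) e
def recvE (a : String) (p : Pol) : Expr := .app (.const .recv) (.ep a p)
def openE (a : String) : Expr := .app (.const .copen) (.chan a)
def futureE (e : Expr) : Expr := .app (.const .future) e

/-- Substitution of an expression for a variable. -/
def subst : Expr → String → Expr → Expr
  | .const k, _, _ => .const k
  | .var y, x, f => if y = x then f else .var y
  | .chan a, _, _ => .chan a
  | .ep a p, _, _ => .ep a p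
  | .lam y e, x, f => if y = x then .lam y e else .lam y (e.subst x f)
  | .app e₁ e₂, x, f => .app (e₁.subst x f) (e₂.subst x f)
  | .split e y z g, x, f =>
      .split (e.subst x f) y z (if y = x ∨ z = x then g else g.subst x f)

/-- Free variables. -/
def fv : Expr → Set String
  | .const _ => ∅
  | .var x => {x}
  | .chan _ => ∅
  | .ep _ _ => ∅
  | .lam x e => e.fv \ {x}
  | .app e f => e.fv ∪ f.fv
  | .split e x y f => e.fv ∪ (f.fv \ {x, y})

/-- Free channels (including the channels of endpoints). -/
def fc : Expr → Set String
  | .const _ => ∅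
  | .var _ => ∅
  | .chan a => {a}
  | .ep a _ => {a}
  | .lam _ e => e.fc
  | .app e f => e.fc ∪ f.fc
  | .split e _ _ f => e.fc ∪ f.fc

/-- Free (polarised) endpoints. -/
def feps : Expr → Set (String × Pol)
  | .const _ => ∅
  | .var _ => ∅
  | .chan _ => ∅
  | .ep a p => {(a, p)}
  | .lam _ e => e.feps
  | .app e f => e.feps ∪ f.feps
  | .split e _ _ f => e.feps ∪ f.feps

end Expr

/-- Evaluation contexts for expressions. -/
inductive ECtx : Type
  | hole : ECtx
  | appL : ECtx → Expr → ECtx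
  | splitC : ECtx → String → String → Expr → ECtx
  | openC : ECtx → ECtx
  | sendC : ECtx → ECtx
  | recvC : ECtx → ECtx
  | bindC : ECtx → ECtx

def ECtx.fill : ECtx → Expr → Expr
  | .hole, e => e
  | .appL E f, e => .app (E.fill e) f
  | .splitC E x y g, e => .split (E.fill e) x y g
  | .openC E, e => .app (.const .copen) (E.fill e)
  | .sendC E, e => .app (.const .send) (E.fill e)
  | .recvC E, e => .app (.const .recv) (E.fill e)
  | .bindC E, e => .app (.const .bind) (E.fill e)

def ECtx.feps : ECtx → Set (String × Pol)
  | .hole => ∅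
  | .appL E f => E.feps ∪ f.feps
  | .splitC E _ _ g => E.feps ∪ g.feps
  | .openC E => E.feps
  | .sendC E => E.feps
  | .recvC E => E.feps
  | .bindC E => E.feps

/-- Call-by-name reduction of expressions. -/
inductive EStep : Expr → Expr → Prop
  | beta {x : String} {e f : Expr} : EStep (.app (.lam x e) f) (e.subst x f)
  | bindRet {e f : Expr} : EStep (Expr.bindE (Expr.retE e) f) (.app f e)
  | splitPair {e₁ e₂ : Expr} {x y : String} {f : Expr} :
      EStep (.split (Expr.pairE e₁ e₂) x y f) ((f.subst x e₁).subst y e₂)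
  | ctx {e f : Expr} (E : ECtx) : EStep e f → EStep (E.fill e) (E.fill f)

/-- Multi-step reduction of expressions. -/
def EMulti : Expr → Expr → Prop := Relation.ReflTransGen EStep

/-- Normal forms. -/
def NormalE (e : Expr) : Prop := ∀ f, ¬ EStep e f

/-- Evaluation contexts for processes (monadic bind chains). -/
inductive PCtx : Type
  | hole : PCtx
  | bindC : PCtx → Expr → PCtx

def PCtx.fill : PCtx → Expr → Expr
  | .hole, e => e
  | .bindC C f, e => Expr.bindE (C.fill e) f

def PCtx.feps : PCtx → Set (String × Pol)
  | .hole => ∅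
  | .bindC C f => C.feps ∪ f.feps

end SID
namespace SID

/-! ## Names and environments -/

inductive Name : Type
  | var : String → Name
  | chan : String → Name
  | ep : String → Pol → Name
  deriving DecidableEq

/-- Bindable names: variables or channels. -/
inductive BName : Type
  | var : String → BName
  | chan : String → BName
  deriving DecidableEq

def BName.toName : BName → Name
  | .var x => .var x
  | .chan a => .chan a

def Expr.ofName : Name → Expr
  | .var x => .var x
  | .chan a => .chan a
  | .ep a p => .ep a p

/-- Number of free occurrences of a name in an expression. -/
def Expr.count (u : Name) : Expr → ℕ
  | .const _ => 0
  | .var x => if u = .var x then 1 else 0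
  | .chan a => if u = .chan a then 1 else 0
  | .ep a p => if u = .ep a p then 1 else 0
  | .lam x e => if u = .var x then 0 else e.count u
  | .app e f => e.count u + f.count u
  | .split e x y f => e.count u + (if u = .var x ∨ u = .var y then 0 else f.count u)

/-- Typing environments. -/
abbrev Env : Type := Name → Option PreTy

namespace Env

def upd (Γ : Env) (u : Name) (t : PreTy) : Env := fun v => if v = u then some t else Γ v

/-- `Γ₁ + Γ₂` is defined: shared assumptions agree and are unlimited. -/
def Compat (Γ₁ Γ₂ : Env) : Prop :=
  ∀ u t₁ t₂, Γ₁ u = some t₁ → Γ₂ u = some t₂ → t₁ = t₂ ∧ PreTy.Un t₁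

/-- The combination `Γ₁ + Γ₂` of environments. -/
def add (Γ₁ Γ₂ : Env) : Env := fun u =>
  match Γ₁ u with
  | some t => some t
  | none => Γ₂ u

end Env

/-- All types in the environment are unlimited. -/
def EnvUn (Γ : Env) : Prop := ∀ u t, Γ u = some t → PreTy.Un t

/-- The environment contains only shared channels. -/
def SharedOnly (Γ : Env) : Prop :=
  ∀ u t, Γ u = some t → (∃ a, u = Name.chan a) ∧ t.label = TyLabel.shared

/-- An environment is balanced if peer endpoints are given dual session types. -/
def Balanced (Γ : Env) : Prop :=
  ∀ a T S, Γ (.ep a .pos) = some T → Γ (.ep a .neg) = some S → T = PreTy.dualS S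

open PreTy in
/-- The type schemas `types(k)` of the constants. -/
inductive ConstTy : Const → PreTy → Prop
  | unit : ConstTy .unit tyUnit
  | ret {t : PreTy} : IsTy t → ConstTy .ret (tyArrow t (tyIO t))
  | copen {T : PreTy} : IsSTy T → ConstTy .copen (tyArrow (tyShared T) (tyIO T))
  | send {t T : PreTy} : IsTy t → IsSTy T →
      ConstTy .send (tyArrow (tyOut t T) (tyLolli t (tyIO T)))
  | recv {t T : PreTy} : IsTy t → IsSTy T →
      ConstTy .recv (tyArrow (tyInp t T) (tyIO (tyProd t T)))
  | future {n : ℕ} {t : PreTy} : IsTy t →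
      ConstTy .future (tyArrow (tyDelayN n (tyIO t)) (tyIO (tyDelayN n t)))
  | bind {t s : PreTy} : IsTy t → IsTy s →
      ConstTy .bind (tyArrow (tyIO t) (tyLolli (tyLolli t (tyIO s)) (tyIO s)))
  | pairLin {t s : PreTy} : IsTy t → IsTy s → Lin t →
      ConstTy .pair (tyArrow t (tyLolli s (tyProd t s)))
  | pairUn {t s : PreTy} : IsTy t → IsTy s → Un t →
      ConstTy .pair (tyArrow t (tyArrow s (tyProd t s)))

open PreTy in
/-- The typing judgement for expressions (Table 3). -/
inductive HasTy : Env → Expr → PreTy → Prop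
  | delayI {Γ : Env} {e : Expr} {t : PreTy} :
      HasTy Γ e t → HasTy Γ e (tyDelay t)
  | const {Γ : Env} {k : Const} {t : PreTy} :
      EnvUn Γ → ConstTy k t → HasTy Γ (.const k) t
  | ax {Γ : Env} {u : Name} {t : PreTy} :
      (∀ v s, v ≠ u → Γ v = some s → Un s) → Γ u = some t → IsTy t →
      HasTy Γ (Expr.ofName u) t
  | arrI {Γ : Env} {x : String} {e : Expr} {t s : PreTy} {n : ℕ} :
      EnvUn Γ → Γ (.var x) = none → IsTy (tyArrow t s) →
      HasTy (Γ.upd (.var x) (tyDelayN n t)) e (tyDelayN n s) →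
      HasTy Γ (.lam x e) (tyDelayN n (tyArrow t s))
  | arrE {Γ₁ Γ₂ : Env} {e₁ e₂ : Expr} {t s : PreTy} {n : ℕ} :
      Env.Compat Γ₁ Γ₂ →
      HasTy Γ₁ e₁ (tyDelayN n (tyArrow t s)) → HasTy Γ₂ e₂ (tyDelayN n t) →
      HasTy (Γ₁.add Γ₂) (.app e₁ e₂) (tyDelayN n s)
  | lolI {Γ : Env} {x : String} {e : Expr} {t s : PreTy} {n : ℕ} :
      Γ (.var x) = none → IsTy (tyLolli t s) →
      HasTy (Γ.upd (.var x) (tyDelayN n t)) e (tyDelayN n s) →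
      HasTy Γ (.lam x e) (tyDelayN n (tyLolli t s))
  | lolE {Γ₁ Γ₂ : Env} {e₁ e₂ : Expr} {t s : PreTy} {n : ℕ} :
      Env.Compat Γ₁ Γ₂ →
      HasTy Γ₁ e₁ (tyDelayN n (tyLolli t s)) → HasTy Γ₂ e₂ (tyDelayN n t) →
      HasTy (Γ₁.add Γ₂) (.app e₁ e₂) (tyDelayN n s)
  | prodE {Γ₁ Γ₂ : Env} {e f : Expr} {x y : String} {t₁ t₂ s : PreTy} {n : ℕ} :
      Env.Compat Γ₁ Γ₂ → x ≠ y → Γ₂ (.var x) = none → Γ₂ (.var y) = none →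
      HasTy Γ₁ e (tyDelayN n (tyProd t₁ t₂)) →
      HasTy ((Γ₂.upd (.var x) (tyDelayN n t₁)).upd (.var y) (tyDelayN n t₂)) f (tyDelayN n s) →
      HasTy (Γ₁.add Γ₂) (.split e x y f) (tyDelayN n s)

end SID
namespace SID

/-! ## Indexed type interpretation -/

/-- Expressions reducing to a normal form. -/
def NSet : Set Expr := {e | ∃ f, EMulti e f ∧ NormalE f}

/-- Expressions reducing to a stuck variable `E[x]`. -/
def NvSet : Set Expr := {e | ∃ (E : ECtx) (x : String), EMulti e (E.fill (.var x))}

/-- Head I/O redexes. -/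
def IOHead (e₀ : Expr) : Prop :=
  (∃ a p f, e₀ = Expr.sendE a p f) ∨ (∃ a p, e₀ = Expr.recvE a p) ∨
  (∃ a, e₀ = Expr.openE a) ∨ (∃ f, e₀ = Expr.futureE f)

/-- Expressions reducing to a pending I/O action `C[e₀]`. -/
def NioSet : Set Expr := {e | ∃ (C : PCtx) (e₀ : Expr), EMulti e (C.fill e₀) ∧ IOHead e₀}

/-- Expressions reducing to an abstraction or to `E[k]`. -/
def RedLamOrK (e : Expr) : Prop :=
  (∃ x f, EMulti e (.lam x f)) ∨ (∃ (E : ECtx) (k : Const), EMulti e (E.fill (.const k)))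

/-- Rank certificates: `RankD t n` witnesses `rank t = n` (Definition 4.7). -/
inductive RankD : PreTy → ℕ → Type
  | base {t : PreTy} :
      t.label = .unit ∨ t.label = .endl ∨ t.label = .inp ∨ t.label = .out ∨ t.label = .shared →
      RankD t 0
  | delay {t : PreTy} : t.label = .delay → RankD t 0
  | io {t : PreTy} {n : ℕ} : t.label = .io → RankD (t.childN 0) n → RankD t (n + 1)
  | prod {t : PreTy} {m n : ℕ} : t.label = .prod →
      RankD (t.childN 0) m → RankD (t.childN 1) n → RankD t (max m n + 1)
  | arrow {t : PreTy} {m n : ℕ} : t.label = .arrow →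
      RankD (t.childN 0) m → RankD (t.childN 1) n → RankD t (max m n + 1)
  | lolli {t : PreTy} {m n : ℕ} : t.label = .lolli →
      RankD (t.childN 0) m → RankD (t.childN 1) n → RankD t (max m n + 1)

/-- Interpretation at rank-0 non-delay types. -/
def interpBase (t : PreTy) : Set Expr :=
  NvSet ∪
    (if t.label = .unit then {e | EMulti e (.const .unit)}
     else if t.label = .shared then {e | ∃ a, EMulti e (.chan a)}
     else {e | ∃ a p, EMulti e (.ep a p)})

/-- Inner recursion of the indexed type interpretation: `prev j` is the
interpretation at all time indices `j < i`. -/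
def interpAux (prev : ℕ → PreTy → Set Expr) (i : ℕ) :
    (t : PreTy) → (n : ℕ) → RankD t n → Set Expr := fun t n d =>
  match d with
  | .base _ => interpBase t
  | .delay _ => if i = 0 then Set.univ else prev (i - 1) (t.childN 0)
  | .io (n := n') _ d' =>
      NvSet ∪ NioSet ∪
        {e | ∃ e', EMulti e (Expr.retE e') ∧ e' ∈ interpAux prev i (t.childN 0) n' d'}
  | .prod (m := m') (n := n') _ d₁ d₂ =>
      NvSet ∪
        {e | ∃ e₁ e₂, EMulti e (Expr.pairE e₁ e₂) ∧
          e₁ ∈ interpAux prev i (t.childN 0) m' d₁ ∧ e₂ ∈ interpAux prev i (t.childN 1) n' d₂}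
  | .arrow (m := m') (n := n') _ d₁ d₂ =>
      NvSet ∪
        {e | RedLamOrK e ∧ ∀ j, j ≤ i → ∀ e',
          e' ∈ (if j = i then interpAux prev i (t.childN 0) m' d₁ else prev j (t.childN 0)) →
          Expr.app e e' ∈
            (if j = i then interpAux prev i (t.childN 1) n' d₂ else prev j (t.childN 1))}
  | .lolli (m := m') (n := n') _ d₁ d₂ =>
      NvSet ∪
        {e | RedLamOrK e ∧ ∀ j, j ≤ i → ∀ e',
          e' ∈ (if j = i then interpAux prev i (t.childN 0) m' d₁ else prev j (t.childN 0)) →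
          Expr.app e e' ∈
            (if j = i then interpAux prev i (t.childN 1) n' d₂ else prev j (t.childN 1))}

/-- The indexed type interpretation `⟦t⟧ᵢ` (Definition 4.8). -/
noncomputable def interp : ℕ → PreTy → Set Expr := fun i =>
  Nat.strongRecOn i fun i ih t =>
    ⋃ (n : ℕ), ⋃ (d : RankD t n),
      interpAux (fun j s => if h : j < i then ih j h s else ∅) i t n d

/-- Simultaneous substitution of expressions for the free variables. -/
def Expr.msubst (δ : String → Expr) : Expr → Expr
  | .const k => .const k
  | .var x => δ x
  | .chan a => .chan a
  | .ep a p => .ep a p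
  | .lam x e => .lam x (e.msubst fun y => if y = x then .var y else δ y)
  | .app e f => .app (e.msubst δ) (f.msubst δ)
  | .split e x y f =>
      .split (e.msubst δ) x y (f.msubst fun z => if z = x ∨ z = y then .var z else δ z)

/-- `δ ⊨ᵢ Γ`. -/
def SatEnv (δ : String → Expr) (i : ℕ) (Γ : Env) : Prop :=
  ∀ x t, Γ (.var x) = some t → δ x ∈ interp i t

end SID
namespace SID

/-! ## Processes -/

inductive Proc : Type
  | nil : Proc
  | thread : String → Expr → Proc
  | server : String → Expr → Proc
  | par : Proc → Proc → Proc
  | nu : BName → Proc → Proc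
  deriving DecidableEq

namespace Proc

/-- Free variables of a process (thread names are free occurrences). -/
def fv : Proc → Set String
  | .nil => ∅
  | .thread x e => {x} ∪ e.fv
  | .server _ e => e.fv
  | .par P Q => P.fv ∪ Q.fv
  | .nu (.var x) P => P.fv \ {x}
  | .nu (.chan _) P => P.fv

/-- Free channels of a process. -/
def fc : Proc → Set String
  | .nil => ∅
  | .thread _ e => e.fc
  | .server a e => {a} ∪ e.fc
  | .par P Q => P.fc ∪ Q.fc
  | .nu (.var _) P => P.fc
  | .nu (.chan a) P => P.fc \ {a}

/-- Substitution of an expression for a variable in a process. -/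
def subst : Proc → String → Expr → Proc
  | .nil, _, _ => .nil
  | .thread y e, x, f => .thread y (e.subst x f)
  | .server a e, x, f => .server a (e.subst x f)
  | .par P Q, x, f => .par (P.subst x f) (Q.subst x f)
  | .nu X P, x, f => if X = .var x then .nu X P else .nu X (P.subst x f)

end Proc

def BName.freeIn : BName → Proc → Prop
  | .var x, P => x ∈ P.fv
  | .chan a, P => a ∈ P.fc

/-- Structural congruence. -/
inductive SC : Proc → Proc → Prop
  | refl (P : Proc) : SC P P
  | symm {P Q : Proc} : SC P Q → SC Q P
  | trans {P Q R : Proc} : SC P Q → SC Q R → SC P R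
  | parComm (P Q : Proc) : SC (.par P Q) (.par Q P)
  | parAssoc (P Q R : Proc) : SC (.par (.par P Q) R) (.par P (.par Q R))
  | parNil (P : Proc) : SC (.par P .nil) P
  | nuNil (X : BName) : SC (.nu X .nil) .nil
  | nuComm (X Y : BName) (P : Proc) : SC (.nu X (.nu Y P)) (.nu Y (.nu X P))
  | nuPar {X : BName} {P Q : Proc} : ¬ X.freeIn Q → SC (.nu X (.par P Q)) (.par (.nu X P) Q)
  | parCong {P P' Q : Proc} : SC P P' → SC (.par P Q) (.par P' Q)
  | nuCong {X : BName} {P P' : Proc} : SC P P' → SC (.nu X P) (.nu X P')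

/-- Reduction of processes (Table 2). -/
inductive PStep : Proc → Proc → Prop
  | popen {a : String} {e : Expr} {x : String} {C : PCtx} {c y : String} :
      c ∉ Proc.fc (.par (.server a e) (.thread x (C.fill (Expr.openE a)))) →
      y ∉ Proc.fv (.par (.server a e) (.thread x (C.fill (Expr.openE a)))) →
      c ≠ a → y ≠ x →
      PStep (.par (.server a e) (.thread x (C.fill (Expr.openE a))))
            (.par (.server a e)
              (.nu (.chan c) (.nu (.var y)
                (.par (.thread x (C.fill (Expr.retE (.ep c .pos))))
                      (.thread y (.app e (.ep c .neg)))))))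
  | comm {x : String} {C : PCtx} {a : String} {p : Pol} {e : Expr} {y : String} {C' : PCtx} :
      PStep (.par (.thread x (C.fill (Expr.sendE a p e)))
                  (.thread y (C'.fill (Expr.recvE a p.dual))))
            (.par (.thread x (C.fill (Expr.retE (.ep a p))))
                  (.thread y (C'.fill (Expr.retE (Expr.pairE e (.ep a p.dual))))))
  | future {x : String} {C : PCtx} {e : Expr} {y : String} :
      y ∉ Proc.fv (.thread x (C.fill (Expr.futureE e))) →
      PStep (.thread x (C.fill (Expr.futureE e)))
            (.nu (.var y) (.par (.thread x (C.fill (Expr.retE (.var y)))) (.thread y e)))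
  | ret {x : String} {e : Expr} {P : Proc} :
      PStep (.nu (.var x) (.par (.thread x (Expr.retE e)) P)) (P.subst x e)
  | thread {x : String} {e f : Expr} : EStep e f → PStep (.thread x e) (.thread x f)
  | nu {X : BName} {P Q : Proc} : PStep P Q → PStep (.nu X P) (.nu X Q)
  | par {P Q R : Proc} : PStep P Q → PStep (.par P R) (.par Q R)
  | cong {P P' Q Q' : Proc} : SC P P' → PStep P' Q' → SC Q' Q → PStep P Q

/-- The reduction `→⁻`, i.e. reduction without the rules r-open and r-future. -/
inductive PStepM : Proc → Proc → Prop
  | comm {x : String} {C : PCtx} {a : String} {p : Pol} {e : Expr} {y : String} {C' : PCtx} :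
      PStepM (.par (.thread x (C.fill (Expr.sendE a p e)))
                  (.thread y (C'.fill (Expr.recvE a p.dual))))
            (.par (.thread x (C.fill (Expr.retE (.ep a p))))
                  (.thread y (C'.fill (Expr.retE (Expr.pairE e (.ep a p.dual))))))
  | ret {x : String} {e : Expr} {P : Proc} :
      PStepM (.nu (.var x) (.par (.thread x (Expr.retE e)) P)) (P.subst x e)
  | thread {x : String} {e f : Expr} : EStep e f → PStepM (.thread x e) (.thread x f)
  | nu {X : BName} {P Q : Proc} : PStepM P Q → PStepM (.nu X P) (.nu X Q)
  | par {P Q R : Proc} : PStepM P Q → PStepM (.par P R) (.par Q R)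
  | cong {P P' Q Q' : Proc} : SC P P' → PStepM P' Q' → SC Q' Q → PStepM P Q

/-! ## Process typing -/

/-- Resource environments. -/
abbrev Res : Type := BName → Option PreTy

namespace Res

def single (X : BName) (t : PreTy) : Res := fun Y => if Y = X then some t else none

def disj (Δ₁ Δ₂ : Res) : Prop := ∀ X, Δ₁ X = none ∨ Δ₂ X = none

def add (Δ₁ Δ₂ : Res) : Res := fun X =>
  match Δ₁ X with
  | some t => some t
  | none => Δ₂ X

def upd (Δ : Res) (X : BName) (t : PreTy) : Res := fun Y => if Y = X then some t else Δ Y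

end Res

open PreTy in
/-- The typing judgement for processes (Table 4). -/
inductive ProcTy : Env → Proc → Res → Prop
  | thread {Γ : Env} {x : String} {e : Expr} {t : PreTy} {n : ℕ} :
      Γ (.var x) = none →
      HasTy Γ e (tyDelayN n (tyIO t)) →
      ProcTy Γ (.thread x e) (Res.single (.var x) (tyDelayN n t))
  | server {Γ : Env} {a : String} {e : Expr} {T t : PreTy} :
      SharedOnly Γ → Un t → IsSTy T →
      (Γ (.chan a) = none ∨ Γ (.chan a) = some (tyShared T)) →
      HasTy Γ e (tyArrow (dualS T) (tyIO t)) →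
      ProcTy (Γ.upd (.chan a) (tyShared T)) (.server a e) (Res.single (.chan a) (tyShared T))
  | par {Γ₁ Γ₂ : Env} {P₁ P₂ : Proc} {Δ₁ Δ₂ : Res} :
      Env.Compat Γ₁ Γ₂ → Res.disj Δ₁ Δ₂ →
      ProcTy Γ₁ P₁ Δ₁ → ProcTy Γ₂ P₂ Δ₂ →
      ProcTy (Γ₁.add Γ₂) (.par P₁ P₂) (Res.add Δ₁ Δ₂)
  | session {Γ : Env} {a : String} {T : PreTy} {P : Proc} {Δ : Res} {p : Pol} :
      Γ (.ep a .pos) = none → Γ (.ep a .neg) = none → IsSTy T →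
      ProcTy ((Γ.upd (.ep a p) T).upd (.ep a p.dual) (dualS T)) P Δ →
      ProcTy Γ (.nu (.chan a) P) Δ
  | new {Γ : Env} {X : BName} {t : PreTy} {P : Proc} {Δ : Res} :
      Γ X.toName = none → Δ X = none →
      ProcTy (Γ.upd X.toName t) P (Δ.upd X t) →
      ProcTy Γ (.nu X P) Δ

/-- A process is typeable. -/
def Typeable (P : Proc) : Prop := ∃ Γ Δ, ProcTy Γ P Δ

/-! ## Initial, reachable and final processes -/

inductive ThreadOnly : Proc → Prop
  | nil : ThreadOnly .nil
  | thread (x : String) (e : Expr) : ThreadOnly (.thread x e)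
  | par {P Q : Proc} : ThreadOnly P → ThreadOnly Q → ThreadOnly (.par P Q)

inductive ServerOnly : Proc → Prop
  | nil : ServerOnly .nil
  | server (a : String) (e : Expr) : ServerOnly (.server a e)
  | par {P Q : Proc} : ServerOnly P → ServerOnly Q → ServerOnly (.par P Q)

def nuList (Xs : List BName) (P : Proc) : Proc := Xs.foldr .nu P

def servList : List (String × Expr) → Proc
  | [] => .nil
  | (a, e) :: l => .par (.server a e) (servList l)

def Proc.Closed (P : Proc) : Prop := P.fv = ∅ ∧ P.fc = ∅

/-- Initial processes: one main thread together with the needed servers. -/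
def Initial (P : Proc) : Prop :=
  P.Closed ∧ Typeable P ∧
  ∃ (x : String) (e : Expr) (l : List (String × Expr)),
    SC P (.nu (.var x) (nuList (l.map fun ae => BName.chan ae.1)
      (.par (.thread x e) (servList l))))

/-- Reachable processes. -/
def Reachable (P : Proc) : Prop :=
  ∃ P₀, Initial P₀ ∧ Relation.ReflTransGen PStep P₀ P

/-- Final processes: only servers are left. -/
def Final (P : Proc) : Prop :=
  ∃ l : List (String × Expr),
    SC P (nuList (l.map fun ae => BName.chan ae.1) (servList l))

end SID
namespace SID

/-! ## Well-polarisation -/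

/-- Polarised names. -/
abbrev PName : Type := BName × Pol

/-- Polarised names of an expression: free endpoints plus `x⁺` for free variables. -/
def Expr.pnames (e : Expr) : Set PName :=
  {pn | (∃ a p, pn = (BName.chan a, p) ∧ (a, p) ∈ e.feps) ∨
        (∃ x, pn = (BName.var x, Pol.pos) ∧ x ∈ e.fv)}

/-- Polarised names of a process. -/
def Proc.pnames : Proc → Set PName
  | .nil => ∅
  | .thread x e => insert (BName.var x, Pol.neg) e.pnames
  | .server _ e => e.pnames
  | .par P Q => P.pnames ∪ Q.pnames
  | .nu X P => P.pnames \ {pn | pn.1 = X}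

/-- Independence of sets of polarised names. -/
def Indep (A B : Set PName) : Prop :=
  ∀ (X : BName) (p q : Pol), (X, p) ∈ A → (X, q) ∈ B → p = q

/-- The least well-polarisation predicate on thread-only processes (Definition 5.4). -/
inductive WP : Proc → Prop
  | nil : WP .nil
  | thread {x : String} {e : Expr} :
      (BName.var x, Pol.pos) ∉ e.pnames → Indep e.pnames e.pnames →
      WP (.thread x e)
  | par {P Q : Proc} (X : BName) (p : Pol) :
      WP P → WP Q →
      Indep (P.pnames \ {(X, p)}) (Q.pnames \ {(X, p.dual)}) →
      WP (.par P Q)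

/-- `Decomp P Q R`: `P ≡ (νX₁…Xₙ)(Q|R)` with `Q = threads(P)` and `R = servers(P)`. -/
def Decomp (P Q R : Proc) : Prop :=
  ∃ Xs : List BName, SC P (nuList Xs (.par Q R)) ∧ ThreadOnly Q ∧ ServerOnly R

/-- A process is well-polarised if `⊨ Q` for some `Q ≡ threads(P)`. -/
def WellPolarised (P : Proc) : Prop :=
  ∃ Q R, Decomp P Q R ∧ WP Q

/-- The subprocess relation `P ⊆ Q` (Definition 5.6). -/
inductive SubP : Proc → Proc → Prop
  | nil : SubP .nil .nil
  | thread (x : String) (e : Expr) : SubP (.thread x e) (.thread x e)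
  | parL {P' P Q : Proc} : SubP P' P → SubP P' (.par P Q)
  | parR {Q' P Q : Proc} : SubP Q' Q → SubP Q' (.par P Q)
  | parBoth {P' Q' P Q : Proc} : SubP P' P → SubP Q' Q → SubP (.par P' Q') (.par P Q)

/-! ## Occurrence counting in processes -/

/-- Free occurrences of a name in the bodies of the threads of a process. -/
def Proc.countThreadBody (u : Name) : Proc → ℕ
  | .nil => 0
  | .thread _ e => e.count u
  | .server _ _ => 0
  | .par P Q => P.countThreadBody u + Q.countThreadBody u
  | .nu X P => if X.toName = u then 0 else P.countThreadBody u

/-- Free occurrences of a name in the bodies of the servers of a process. -/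
def Proc.countServerBody (u : Name) : Proc → ℕ
  | .nil => 0
  | .thread _ _ => 0
  | .server _ e => e.count u
  | .par P Q => P.countServerBody u + Q.countServerBody u
  | .nu X P => if X.toName = u then 0 else P.countServerBody u

/-- Occurrences of a name as the name of a thread of a process. -/
def Proc.countThreadName (u : Name) : Proc → ℕ
  | .nil => 0
  | .thread x _ => if Name.var x = u then 1 else 0
  | .server _ _ => 0
  | .par P Q => P.countThreadName u + Q.countThreadName u
  | .nu X P => if X.toName = u then 0 else P.countThreadName u

/-! ## Precedence between threads -/

/-- The endpoint `a^p` is ready in `e`. -/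
def ReadyIn (a : String) (p : Pol) (e : Expr) : Prop :=
  (∃ (C : PCtx) (f : Expr), e = C.fill (Expr.sendE a p f)) ∨
  (∃ C : PCtx, e = C.fill (Expr.recvE a p))

/-- The endpoint `a^p` is blocked in `e`. -/
def BlockedIn (a : String) (p : Pol) (e : Expr) : Prop :=
  (∃ (C : PCtx) (b : String) (q : Pol) (f : Expr),
      e = C.fill (Expr.sendE b q f) ∧ a ≠ b ∧ ((a, p) ∈ C.feps ∨ (a, p) ∈ f.feps)) ∨
  (∃ (C : PCtx) (b : String) (q : Pol),
      e = C.fill (Expr.recvE b q) ∧ a ≠ b ∧ (a, p) ∈ C.feps) ∨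
  (∃ (E : ECtx) (x : String), e = E.fill (.var x) ∧ (a, p) ∈ E.feps)

/-- The expression `e` precedes the expression `f`. -/
def EPrec (e f : Expr) : Prop :=
  ∃ a p, ReadyIn a p f ∧ BlockedIn a p.dual e

/-- The thread `⟨x⟩e` precedes the thread `⟨y⟩f`. -/
def TPrec (xe yf : String × Expr) : Prop :=
  EPrec xe.2 yf.2 ∨ ∃ E : ECtx, yf.2 = E.fill (.var xe.1)

end SID


/-!
The proof is by induction on the derivation. Every rule except the axiom concludes a type of
the form `•ⁿ t`, so delaying its conclusion just raises `n` by one, and the premises are delayed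
by the induction hypothesis, with the bound variables added to the delayed part of the
environment. An axiom whose name is delayed types at the delayed type directly; otherwise one
applies `•I`. Unlimitedness, type-hood and compatibility of environments are all stable under `•`.
-/

namespace SID

namespace PreTy

@[simp]
lemma label_tyDelay (t : PreTy) : (tyDelay t).label = .delay := rfl

@[simp]
lemma childN_tyDelay (t : PreTy) : (tyDelay t).childN 0 = t := rfl

lemma tyDelayN_succ (n : ℕ) (t : PreTy) : tyDelayN (n + 1) t = tyDelay (tyDelayN n t) :=
  Function.iterate_succ_apply' _ _ _

lemma Lin.of_tyDelay {t : PreTy} (h : Lin (tyDelay t)) : Lin t := by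
  cases h with
  | delay _ h => exact h
  | _ h => simp at h

lemma Un.tyDelay {t : PreTy} (h : Un t) : Un (tyDelay t) :=
  fun hl => h hl.of_tyDelay

lemma Subtree.of_tyDelay {s t : PreTy} (h : Subtree s (tyDelay t)) :
    s = tyDelay t ∨ Subtree s t := by
  cases h with
  | refl => exact .inl rfl
  | child n hn hs =>
    obtain rfl : n = 0 := by simpa [TyLabel.arity] using hn
    exact .inr hs

lemma InfPath.of_tyDelay {t : PreTy} {p : ℕ → PreTy} (hp : InfPath (tyDelay t) p) :
    InfPath t (fun n => p (n + 1)) := by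
  obtain ⟨hp0, hstep⟩ := hp
  refine ⟨?_, fun n => hstep (n + 1)⟩
  obtain ⟨k, hk, hp1⟩ := hstep 0
  rw [hp0] at hk hp1
  obtain rfl : k = 0 := by simpa [TyLabel.arity] using hk
  exact hp1

lemma IsTy.tyDelay {t : PreTy} (h : IsTy t) : IsTy (tyDelay t) := by
  obtain ⟨hfin, hpath, harrow, hlolli⟩ := h
  refine ⟨(hfin.insert t.tyDelay).subset fun s hs => hs.of_tyDelay, ?_, ?_, ?_⟩
  · intro p hp n
    obtain ⟨m, hnm, hm⟩ := hpath _ hp.of_tyDelay n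
    exact ⟨m + 1, by omega, hm⟩
  · intro s hs hl
    rcases hs.of_tyDelay with rfl | hs
    · simp at hl
    · exact harrow s hs hl
  · intro s hs hl
    rcases hs.of_tyDelay with rfl | hs
    · simp at hl
    · exact hlolli s hs hl

end PreTy

open PreTy

namespace Env

/-- `Γ₁, •Γ₂` for the splitting in which `Γ₂` is the part of `Γ` on the names selected by `S`. -/
def delay (S : Name → Bool) (Γ : Env) : Env :=
  fun u => if S u then (Γ u).map tyDelay else Γ u

variable {S : Name → Bool} {Γ : Env}

lemma delay_eq_some {u : Name} {t : PreTy} (h : delay S Γ u = some t) :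
    ∃ s, Γ u = some s ∧ t = if S u then tyDelay s else s := by
  unfold delay at h
  split_ifs at h ⊢ with hS
  · obtain ⟨s, hs, rfl⟩ := Option.map_eq_some_iff.mp h
    exact ⟨s, hs, rfl⟩
  · exact ⟨t, h, rfl⟩

lemma un_of_delay_eq_some {u : Name} {t : PreTy} (h : delay S Γ u = some t)
    (hun : ∀ s, Γ u = some s → Un s) : Un t := by
  obtain ⟨s, hs, rfl⟩ := delay_eq_some h
  split_ifs
  exacts [(hun s hs).tyDelay, hun s hs]

lemma delay_eq_none {u : Name} (h : Γ u = none) : delay S Γ u = none := by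
  simp [delay, h]

lemma delay_add (Γ₁ Γ₂ : Env) : delay S (Γ₁.add Γ₂) = (delay S Γ₁).add (delay S Γ₂) := by
  funext u
  unfold delay add
  by_cases hS : S u <;> cases hΓ : Γ₁ u <;> simp [hS, hΓ]

lemma delay_upd (u : Name) (t : PreTy) :
    delay (Function.update S u true) (Γ.upd u t) = (delay S Γ).upd u (tyDelay t) := by
  funext v
  unfold delay upd
  by_cases hv : v = u <;> simp [hv]

lemma Compat.delay {Γ₁ Γ₂ : Env} (h : Compat Γ₁ Γ₂) : Compat (delay S Γ₁) (delay S Γ₂) := by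
  intro u t₁ t₂ h₁ h₂
  obtain ⟨s₁, hs₁, rfl⟩ := delay_eq_some h₁
  obtain ⟨s₂, hs₂, rfl⟩ := delay_eq_some h₂
  obtain ⟨rfl, hun⟩ := h u s₁ s₂ hs₁ hs₂
  split_ifs
  exacts [⟨rfl, hun.tyDelay⟩, ⟨rfl, hun⟩]

end Env

lemma EnvUn.delay {S : Name → Bool} {Γ : Env} (h : EnvUn Γ) : EnvUn (Γ.delay S) :=
  fun _ _ ht => Env.un_of_delay_eq_some ht (h _)

open Env in
lemma HasTy.delay {Γ : Env} {e : Expr} {t : PreTy} (h : HasTy Γ e t) (S : Name → Bool) :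
    HasTy (Γ.delay S) e (tyDelay t) := by
  induction h generalizing S with
  | delayI _ ih => exact .delayI (ih S)
  | const hΓ hk => exact .delayI (.const hΓ.delay hk)
  | @ax Γ u t hside hu ht =>
    have hside' : ∀ v s, v ≠ u → Γ.delay S v = some s → Un s :=
      fun v _ hv hvs => un_of_delay_eq_some hvs (hside v · hv)
    by_cases hS : S u
    · exact .ax hside' (by simp [Env.delay, hS, hu]) ht.tyDelay
    · exact .delayI (.ax hside' (by simp [Env.delay, hS, hu]) ht)
  | @arrI _ x _ _ _ _ hΓ hx hty _ ih =>
    rw [← tyDelayN_succ]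
    refine .arrI hΓ.delay (delay_eq_none hx) hty ?_
    simpa only [tyDelayN_succ, delay_upd] using ih (Function.update S (.var x) true)
  | arrE hc _ _ ih₁ ih₂ =>
    rw [← tyDelayN_succ] at ih₁ ih₂ ⊢
    rw [delay_add]
    exact .arrE hc.delay (ih₁ S) (ih₂ S)
  | @lolI _ x _ _ _ _ hx hty _ ih =>
    rw [← tyDelayN_succ]
    refine .lolI (delay_eq_none hx) hty ?_
    simpa only [tyDelayN_succ, delay_upd] using ih (Function.update S (.var x) true)
  | lolE hc _ _ ih₁ ih₂ =>
    rw [← tyDelayN_succ] at ih₁ ih₂ ⊢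
    rw [delay_add]
    exact .lolE hc.delay (ih₁ S) (ih₂ S)
  | @prodE _ _ _ _ x y _ _ _ _ hc hxy hx hy _ _ ih₁ ih₂ =>
    rw [← tyDelayN_succ] at ih₁ ⊢
    rw [delay_add]
    refine .prodE hc.delay hxy (delay_eq_none hx) (delay_eq_none hy) (ih₁ S) ?_
    simpa only [tyDelayN_succ, delay_upd] using
      ih₂ (Function.update (Function.update S (.var x) true) (.var y) true)

/-- **Lemma 4.1 (Delay).**
If `Γ ⊢ e : t`, then `Γ₁, •Γ₂ ⊢ e : •t` for every splitting `Γ = Γ₁, Γ₂`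
(the splitting is given by the characteristic function `S` of `Γ₂`). -/
theorem delay_lemma {Γ : Env} {e : Expr} {t : PreTy} (h : HasTy Γ e t) :
    ∀ S : Name → Bool,
      HasTy (fun u => if S u then (Γ u).map PreTy.tyDelay else Γ u) e (PreTy.tyDelay t) :=
  h.delay

end SID
end

section
/- Lemma 4.2: if Γ ⊢ e : t is derivable in the SID type system and un(t) holds, then un(Γ) holds, i.e. every type in Γ is unlimited. -/
set_option autoImplicit false

/-!
Induction on the typing derivation. Everything is immediate except application `e₁ e₂`
with `e₁ : •ⁿ(t → s)`, `e₂ : •ⁿt` and `s` unlimited: there the clause of validity saying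
that `t → s` with `un(s)` forces `un(t)` makes the type of `e₂` unlimited too, so both
premises apply. Hence one first shows that every type derived by the rules satisfies the
arrow and lolli clauses of validity: the rules only introduce valid types, and the result
type of an elimination is a subtree of a premise type.
-/

namespace SID
namespace PreTy

lemma label_mk {l : TyLabel} (f : Fin l.arity → PreTy) :
    label (PFunctor.M.mk (F := TyF) ⟨l, f⟩) = l := by
  unfold label; erw [PFunctor.M.dest_mk]

lemma childN_mk {l : TyLabel} (f : Fin l.arity → PreTy) {n : ℕ} (h : n < l.arity) :
    childN (PFunctor.M.mk (F := TyF) ⟨l, f⟩) n = f ⟨n, h⟩ := by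
  unfold childN label
  erw [PFunctor.M.dest_mk]
  exact dif_pos h

@[simp] lemma label_mk1 (l : TyLabel) (t : PreTy) : label (mk1 l t) = l := label_mk _
@[simp] lemma label_mk2 (l : TyLabel) (t s : PreTy) : label (mk2 l t s) = l := label_mk _

lemma childN_mk1 {l : TyLabel} (t : PreTy) {n : ℕ} (h : n < l.arity) :
    childN (mk1 l t) n = t :=
  childN_mk _ h

lemma childN_mk2 {l : TyLabel} (t s : PreTy) {n : ℕ} (h : n < l.arity) :
    childN (mk2 l t s) n = if n = 0 then t else s :=
  childN_mk _ h

lemma lin_iff {t : PreTy} :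
    Lin t ↔ t.label = .inp ∨ t.label = .out ∨ t.label = .lolli ∨ t.label = .io ∨
      (t.label = .prod ∧ (Lin (t.childN 0) ∨ Lin (t.childN 1))) ∨
      (t.label = .delay ∧ Lin (t.childN 0)) := by
  constructor
  · rintro (h | h | h | h | ⟨h, hc⟩ | ⟨h, hc⟩ | ⟨h, hc⟩) <;> simp [*]
  · rintro (h | h | h | h | ⟨h, hc | hc⟩ | ⟨h, hc⟩)
    exacts [.inp h, .out h, .lolli h, .io h, .prodL h hc, .prodR h hc, .delay h hc]

@[simp] lemma lin_lolli (t s : PreTy) : Lin (tyLolli t s) := .lolli (label_mk2 _ t s)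

@[simp] lemma lin_io (t : PreTy) : Lin (tyIO t) := .io (label_mk1 _ t)


@[simp] lemma lin_delay_iff {t : PreTy} : Lin (tyDelay t) ↔ Lin t := by
  rw [lin_iff]; simp [tyDelay, childN_mk1 (l := .delay) t (n := 0) (by decide)]

@[simp] lemma lin_prod_iff {t s : PreTy} : Lin (tyProd t s) ↔ Lin t ∨ Lin s := by
  rw [lin_iff]
  simp [tyProd, childN_mk2 (l := .prod) t s (n := 0) (by decide),
    childN_mk2 (l := .prod) t s (n := 1) (by decide)]

@[simp] lemma lin_delayN_iff {n : ℕ} {t : PreTy} : Lin (tyDelayN n t) ↔ Lin t := by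
  induction n with
  | zero => rfl
  | succ n ih => rw [tyDelayN_succ, lin_delay_iff, ih]

lemma un_delayN_iff {n : ℕ} {t : PreTy} : Un (tyDelayN n t) ↔ Un t :=
  not_congr lin_delayN_iff

lemma un_arrow (t s : PreTy) : Un (tyArrow t s) := by
  rw [Un, lin_iff]; simp [tyArrow]

lemma Subtree.trans {a b c : PreTy} (hab : Subtree a b) (hbc : Subtree b c) : Subtree a c := by
  induction hbc with
  | refl => exact hab
  | child n hn _ ih => exact .child n hn ih

lemma subtree_iff {s t : PreTy} :
    Subtree s t ↔ s = t ∨ ∃ n < t.label.arity, Subtree s (t.childN n) := by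
  constructor
  · rintro (_ | ⟨n, hn, hs⟩)
    exacts [.inl rfl, .inr ⟨n, hn, hs⟩]
  · rintro (rfl | ⟨n, hn, hs⟩)
    exacts [.refl s, .child n hn hs]

def ValidAt (t : PreTy) : Prop :=
  (t.label = .arrow → Un (t.childN 1) → Un (t.childN 0)) ∧
  (t.label = .lolli → Lin (t.childN 1))

/-- The arrow and lolli clauses of `IsTy`: unlike finiteness and contractiveness, these can be
checked constructor by constructor. -/
def WellFormed (t : PreTy) : Prop := ∀ s, Subtree s t → ValidAt s

lemma IsTy.wellFormed {t : PreTy} (h : IsTy t) : WellFormed t :=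
  fun s hs => ⟨h.2.2.1 s hs, h.2.2.2 s hs⟩

lemma WellFormed.validAt {t : PreTy} (h : WellFormed t) : ValidAt t := h t (.refl t)

lemma WellFormed.of_subtree {s t : PreTy} (h : WellFormed t) (hst : Subtree s t) :
    WellFormed s :=
  fun u hu => h u (hu.trans hst)

lemma wellFormed_iff {t : PreTy} :
    WellFormed t ↔ ValidAt t ∧ ∀ n < t.label.arity, WellFormed (t.childN n) := by
  constructor
  · intro h
    exact ⟨h.validAt, fun n hn => h.of_subtree (.child n hn (.refl _))⟩
  · rintro ⟨hv, hc⟩ s hs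
    rcases subtree_iff.mp hs with rfl | ⟨n, hn, hs⟩
    exacts [hv, hc n hn s hs]

lemma validAt_of_label {t : PreTy} (h₁ : t.label ≠ .arrow) (h₂ : t.label ≠ .lolli) :
    ValidAt t :=
  ⟨fun h => absurd h h₁, fun h => absurd h h₂⟩

lemma wellFormed_mk1_iff {l : TyLabel} (hl : l.arity = 1) {t : PreTy} :
    WellFormed (mk1 l t) ↔ WellFormed t := by
  have hv : ValidAt (mk1 l t) := by
    refine validAt_of_label ?_ ?_ <;> rintro h <;> rw [label_mk1] at h <;> subst h <;>
      cases hl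
  rw [wellFormed_iff, label_mk1, hl]
  simp [hv, childN_mk1 t (hl ▸ Nat.zero_lt_one)]

lemma wellFormed_mk2_iff {l : TyLabel} (hl : l.arity = 2) {t s : PreTy} :
    WellFormed (mk2 l t s) ↔
      ((l = .arrow → Un s → Un t) ∧ (l = .lolli → Lin s)) ∧ WellFormed t ∧ WellFormed s := by
  have h₀ := childN_mk2 t s (hl ▸ Nat.zero_lt_two)
  have h₁ := childN_mk2 t s (hl ▸ Nat.one_lt_two)
  simp only [one_ne_zero, ↓reduceIte] at h₀ h₁
  rw [wellFormed_iff, label_mk2, hl, ValidAt, label_mk2, h₀, h₁]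
  refine and_congr_right fun _ => ⟨fun h => ⟨h₀ ▸ h 0 Nat.zero_lt_two, h₁ ▸ h 1 Nat.one_lt_two⟩, ?_⟩
  rintro ⟨ht, hs⟩ n hn
  rw [childN_mk2 t s (hl ▸ hn)]
  split_ifs
  exacts [ht, hs]

@[simp] lemma wellFormed_unit : WellFormed tyUnit := by
  have hl : tyUnit.label = .unit := label_mk _
  rw [wellFormed_iff, hl]
  exact ⟨validAt_of_label (by rw [hl]; decide) (by rw [hl]; decide),
    fun n hn => absurd hn (Nat.not_lt_zero n)⟩

@[simp] lemma wellFormed_delay_iff {t : PreTy} : WellFormed (tyDelay t) ↔ WellFormed t :=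
  wellFormed_mk1_iff rfl

@[simp] lemma wellFormed_io_iff {t : PreTy} : WellFormed (tyIO t) ↔ WellFormed t :=
  wellFormed_mk1_iff rfl

@[simp] lemma wellFormed_shared_iff {t : PreTy} : WellFormed (tyShared t) ↔ WellFormed t :=
  wellFormed_mk1_iff rfl

@[simp] lemma wellFormed_delayN_iff {n : ℕ} {t : PreTy} :
    WellFormed (tyDelayN n t) ↔ WellFormed t := by
  induction n with
  | zero => rfl
  | succ n ih => rw [tyDelayN_succ, wellFormed_delay_iff, ih]

@[simp] lemma wellFormed_prod_iff {t s : PreTy} :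
    WellFormed (tyProd t s) ↔ WellFormed t ∧ WellFormed s := by
  simp [tyProd, wellFormed_mk2_iff (l := .prod) rfl]

@[simp] lemma wellFormed_inp_iff {t s : PreTy} :
    WellFormed (tyInp t s) ↔ WellFormed t ∧ WellFormed s := by
  simp [tyInp, wellFormed_mk2_iff (l := .inp) rfl]

@[simp] lemma wellFormed_out_iff {t s : PreTy} :
    WellFormed (tyOut t s) ↔ WellFormed t ∧ WellFormed s := by
  simp [tyOut, wellFormed_mk2_iff (l := .out) rfl]

@[simp] lemma wellFormed_arrow_iff {t s : PreTy} :
    WellFormed (tyArrow t s) ↔ (Un s → Un t) ∧ WellFormed t ∧ WellFormed s := by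
  simp [tyArrow, wellFormed_mk2_iff (l := .arrow) rfl]

@[simp] lemma wellFormed_lolli_iff {t s : PreTy} :
    WellFormed (tyLolli t s) ↔ Lin s ∧ WellFormed t ∧ WellFormed s := by
  simp [tyLolli, wellFormed_mk2_iff (l := .lolli) rfl]

end PreTy

open PreTy

lemma ConstTy.wellFormed {k : Const} {t : PreTy} (h : ConstTy k t) : WellFormed t := by
  cases h <;> simp_all [Un, IsSTy, IsTy.wellFormed]

lemma HasTy.wellFormed {Γ : Env} {e : Expr} {t : PreTy} (h : HasTy Γ e t) : WellFormed t := by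
  induction h with
  | delayI _ ih => exact wellFormed_delay_iff.mpr ih
  | const _ hk => exact hk.wellFormed
  | ax _ _ ht => exact ht.wellFormed
  | arrI _ _ ht => exact wellFormed_delayN_iff.mpr ht.wellFormed
  | lolI _ ht => exact wellFormed_delayN_iff.mpr ht.wellFormed
  | arrE _ _ _ ih => simp_all
  | lolE _ _ _ ih => simp_all
  | prodE _ _ _ _ _ _ _ ih => exact ih

lemma EnvUn.add {Γ₁ Γ₂ : Env} (h₁ : EnvUn Γ₁) (h₂ : EnvUn Γ₂) : EnvUn (Γ₁.add Γ₂) := by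
  intro u t h
  cases h₁u : Γ₁ u with
  | some s =>
      simp only [Env.add, h₁u, Option.some.injEq] at h
      exact h ▸ h₁ u s h₁u
  | none =>
      simp only [Env.add, h₁u] at h
      exact h₂ u t h

lemma EnvUn.un_of_upd {Γ : Env} {u : Name} {t : PreTy} (h : EnvUn (Γ.upd u t)) : Un t :=
  h u t (if_pos rfl)

lemma EnvUn.of_upd {Γ : Env} {u : Name} {t : PreTy} (h : EnvUn (Γ.upd u t))
    (hu : Γ u = none) : EnvUn Γ := by
  intro v s hv
  have hvu : v ≠ u := by rintro rfl; simp [hu] at hv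
  exact h v s (by simp [Env.upd, hvu, hv])

/-- **Lemma 4.2.** If `Γ ⊢ e : t` and `un(t)`, then `un(Γ)`. -/
theorem un_type_implies_un_env {Γ : Env} {e : Expr} {t : PreTy}
    (h : HasTy Γ e t) (hun : PreTy.Un t) : EnvUn Γ := by
  induction h with
  | delayI _ ih => exact ih fun hlin => hun (lin_delay_iff.mpr hlin)
  | const hΓ => exact hΓ
  | @ax Γ u t hrest hu =>
      intro v s hv
      by_cases hvu : v = u
      · subst hvu
        exact Option.some.inj (hu.symm.trans hv) ▸ hun
      · exact hrest v s hvu hv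
  | arrI hΓ => exact hΓ
  | lolI => exact absurd (lin_delayN_iff.mpr (lin_lolli _ _)) hun
  | arrE _ h₁ _ ih₁ ih₂ =>
      have hun_s := un_delayN_iff.mp hun
      have hun_t := (wellFormed_arrow_iff.mp (wellFormed_delayN_iff.mp h₁.wellFormed)).1 hun_s
      exact (ih₁ (un_delayN_iff.mpr (un_arrow _ _))).add (ih₂ (un_delayN_iff.mpr hun_t))
  | lolE _ h₁ =>
      have hlin_s := (wellFormed_lolli_iff.mp (wellFormed_delayN_iff.mp h₁.wellFormed)).1
      exact absurd (lin_delayN_iff.mpr hlin_s) hun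
  | @prodE Γ₁ Γ₂ _ _ x y t₁ t₂ _ n _ hxy hx hy _ _ ihe ihf =>
      have hΓ₂xy := ihf hun
      have hΓ₂x : EnvUn (Γ₂.upd (.var x) (tyDelayN n t₁)) :=
        hΓ₂xy.of_upd (by simp [Env.upd, Ne.symm hxy, hy])
      have hprod : Un (tyDelayN n (tyProd t₁ t₂)) := un_delayN_iff.mpr fun hlin =>
        (lin_prod_iff.mp hlin).elim (un_delayN_iff.mp hΓ₂x.un_of_upd)
          (un_delayN_iff.mp hΓ₂xy.un_of_upd)
      exact (ihe hprod).add (hΓ₂x.of_upd hx)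

end SID
end

section
/- Lemma 5.5: if ⊨P holds and Q ⊆ P (Q is a subprocess of P in the structural sense), then ⊨Q holds. -/
set_option autoImplicit false

namespace SID

lemma subP_pnames_subset {Q P : Proc} (h : SubP Q P) : Q.pnames ⊆ P.pnames := by
  induction h with
  | nil => exact le_refl _
  | thread x e => exact le_refl _
  | parL _ ih => exact ih.trans (Set.subset_union_left)
  | parR _ ih => exact ih.trans (Set.subset_union_right)
  | parBoth _ _ ih1 ih2 => exact Set.union_subset_union ih1 ih2

/-- **Lemma 5.5.** If `⊨ P` and `Q ⊆ P`, then `⊨ Q`. -/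
theorem wp_subprocess {P Q : Proc} (h : WP P) (hsub : SubP Q P) : WP Q := by
  induction hsub with
  | nil => exact h
  | thread x e => exact h
  | parL _ ih => cases h with | par X p hP hQ hI => exact ih hP
  | parR _ ih => cases h with | par X p hP hQ hI => exact ih hQ
  | parBoth h1 h2 ih1 ih2 =>
    cases h with
    | par X p hP hQ hI =>
      refine WP.par X p (ih1 hP) (ih2 hQ) ?_
      intro Y a b hA hB
      exact hI Y a b ⟨subP_pnames_subset h1 hA.1, hA.2⟩ ⟨subP_pnames_subset h2 hB.1, hB.2⟩

end SID
end
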